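/- Kahane–Khintchine averaging estimate for averages: let K be a dyadic cube, k ≥ 0, and for each i in a finite index set let φ_i be a nonnegative locally integrable function. Then Σ_{I : I^{(k)}=K} |K|^{-1} (Σ_i |I|² ⟨φ_i⟩_I²)^{1/2} ≲ ⟨ (Σ_i φ_i²)^{1/2} ⟩_K, with implicit constant independent of K, k, and the φ_i. (Here the sum is over all dyadic cubes I whose k-th ancestor is K.) -/

import Mathlib

open MeasureTheory Set Filter Topology
open scoped ENNReal NNReal BigOperators Classical

noncomputable section

/-- A dyadic cube in `ℝ^n`, given by a scale and an integer position. Its side length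
is `2^(-scale)`. -/
structure DyadicCube (n : ℕ) where
  scale : ℤ
  pos : Fin n → ℤ
deriving DecidableEq

namespace DyadicCube
variable {n : ℕ}
instance : Inhabited (DyadicCube n) := ⟨⟨0, fun _ => 0⟩⟩
/-- Side length. -/
def len (Q : DyadicCube n) : ℝ := (2 : ℝ) ^ (-Q.scale)
/-- The underlying half-open cube. -/
def carrier (Q : DyadicCube n) : Set (Fin n → ℝ) :=
  {x | ∀ i, (Q.pos i : ℝ) * Q.len ≤ x i ∧ x i < ((Q.pos i : ℝ) + 1) * Q.len}
/-- The dyadic child selected by `ε`. -/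
def child (Q : DyadicCube n) (ε : Fin n → Bool) : DyadicCube n :=
  ⟨Q.scale + 1, fun i => 2 * Q.pos i + (if ε i then 1 else 0)⟩
/-- The `k`-th dyadic ancestor. -/
def ancestor (k : ℕ) (Q : DyadicCube n) : DyadicCube n :=
  ⟨Q.scale - k, fun i => Int.fdiv (Q.pos i) (2 ^ k)⟩
end DyadicCube

/-- A general axis-parallel cube in `ℝ^n`. -/
structure Cube (n : ℕ) where
  corner : Fin n → ℝ
  side : ℝ
  side_pos : 0 < side

def Cube.carrier {n : ℕ} (Q : Cube n) : Set (Fin n → ℝ) :=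
  {x | ∀ i, Q.corner i ≤ x i ∧ x i < Q.corner i + Q.side}

/-- Average of `f` over a dyadic cube. -/
def cubeAvg {n : ℕ} (f : (Fin n → ℝ) → ℝ) (Q : DyadicCube n) : ℝ :=
  (volume Q.carrier).toReal⁻¹ * ∫ x in Q.carrier, f x

/-- The martingale difference `Δ_Q f = Σ_{Q' ∈ ch(Q)} (⟨f⟩_{Q'} − ⟨f⟩_Q) 1_{Q'}`. -/
def mdiff {n : ℕ} (f : (Fin n → ℝ) → ℝ) (Q : DyadicCube n) (x : Fin n → ℝ) : ℝ :=
  ∑ ε : Fin n → Bool,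
    Set.indicator (Q.child ε).carrier (fun _ => cubeAvg f (Q.child ε) - cubeAvg f Q) x

/-- One-dimensional Haar function on the dyadic interval of scale `k`, position `m`;
`b = false` gives the non-cancellative `h^0`, `b = true` the cancellative `h^1`. -/
def haar1 (k : ℤ) (m : ℤ) (b : Bool) (t : ℝ) : ℝ :=
  let len : ℝ := (2 : ℝ) ^ (-k)
  let lo : ℝ := (m : ℝ) * len
  Real.sqrt len⁻¹ *
    (if b then
        (if lo ≤ t ∧ t < lo + len / 2 then 1
         else if lo + len / 2 ≤ t ∧ t < lo + len then -1 else 0)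
      else (if lo ≤ t ∧ t < lo + len then 1 else 0))

/-- Tensor-product Haar function of signature `η` on a dyadic cube. -/
def haarCube {n : ℕ} (Q : DyadicCube n) (η : Fin n → Bool) (x : Fin n → ℝ) : ℝ :=
  ∏ i, haar1 Q.scale (Q.pos i) (η i) (x i)

/-- The nonzero (cancellative) Haar signatures. -/
def sigSet (n : ℕ) : Finset (Fin n → Bool) :=
  Finset.univ.filter fun η => η ≠ (fun _ => false)

/-- `ℝ≥0∞`-valued average over a set. -/
def setAvgE {α : Type*} [MeasureSpace α] (g : α → ℝ≥0∞) (s : Set α) : ℝ≥0∞ :=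
  (volume s)⁻¹ * ∫⁻ x in s, g x

/-- One-parameter `A_p` constant over general cubes. -/
def apConst {n : ℕ} (w : (Fin n → ℝ) → ℝ≥0∞) (p : ℝ) : ℝ≥0∞ :=
  ⨆ Q : Cube n, setAvgE w Q.carrier *
    (setAvgE (fun x => w x ^ (1 - p / (p - 1))) Q.carrier) ^ (p - 1)

/-- One-parameter `A_p` constant over dyadic cubes. -/
def apConstD {n : ℕ} (w : (Fin n → ℝ) → ℝ≥0∞) (p : ℝ) : ℝ≥0∞ :=
  ⨆ Q : DyadicCube n, setAvgE w Q.carrier *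
    (setAvgE (fun x => w x ^ (1 - p / (p - 1))) Q.carrier) ^ (p - 1)

/-- Bi-parameter `A_p` constant over rectangles `Q₁ × Q₂` of general cubes. -/
def apConst2 {n₁ n₂ : ℕ} (w : (Fin n₁ → ℝ) × (Fin n₂ → ℝ) → ℝ≥0∞) (p : ℝ) : ℝ≥0∞ :=
  ⨆ (Q₁ : Cube n₁) (Q₂ : Cube n₂),
    setAvgE w (Q₁.carrier ×ˢ Q₂.carrier) *
      (setAvgE (fun x => w x ^ (1 - p / (p - 1))) (Q₁.carrier ×ˢ Q₂.carrier)) ^ (p - 1)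

/-- Average over a dyadic rectangle in a bi-parameter space. -/
def rectAvg {n₁ n₂ : ℕ} (f : (Fin n₁ → ℝ) × (Fin n₂ → ℝ) → ℝ)
    (Q₁ : DyadicCube n₁) (Q₂ : DyadicCube n₂) : ℝ :=
  (volume (Q₁.carrier ×ˢ Q₂.carrier)).toReal⁻¹ * ∫ x in Q₁.carrier ×ˢ Q₂.carrier, f x

/-- Martingale difference acting in the first variable only. -/
def mdiff1 {n₁ n₂ : ℕ} (f : (Fin n₁ → ℝ) × (Fin n₂ → ℝ) → ℝ) (P : DyadicCube n₁)
    (x : (Fin n₁ → ℝ) × (Fin n₂ → ℝ)) : ℝ := mdiff (fun y => f (y, x.2)) P x.1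

/-- Martingale difference acting in the second variable only. -/
def mdiff2 {n₁ n₂ : ℕ} (f : (Fin n₁ → ℝ) × (Fin n₂ → ℝ) → ℝ) (P : DyadicCube n₂)
    (x : (Fin n₁ → ℝ) × (Fin n₂ → ℝ)) : ℝ := mdiff (fun y => f (x.1, y)) P x.2

/-- One-parameter (dyadic) maximal function in the first variable. -/
def M1E {n₁ n₂ : ℕ} (f : (Fin n₁ → ℝ) × (Fin n₂ → ℝ) → ℝ)
    (x : (Fin n₁ → ℝ) × (Fin n₂ → ℝ)) : ℝ≥0∞ :=
  ⨆ (Q : DyadicCube n₁) (_ : x.1 ∈ Q.carrier),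
    setAvgE (fun y => (‖f (y, x.2)‖₊ : ℝ≥0∞)) Q.carrier

/-- One-parameter (dyadic) maximal function in the second variable, acting on an
`ℝ≥0∞`-valued function. -/
def M2E {n₁ n₂ : ℕ} (F : (Fin n₁ → ℝ) × (Fin n₂ → ℝ) → ℝ≥0∞)
    (x : (Fin n₁ → ℝ) × (Fin n₂ → ℝ)) : ℝ≥0∞ :=
  ⨆ (Q : DyadicCube n₂) (_ : x.2 ∈ Q.carrier),
    (volume Q.carrier)⁻¹ * ∫⁻ y in Q.carrier, F (x.1, y)

/-- The strong (bi-parameter) dyadic maximal function. -/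
def Mstrong {n₁ n₂ : ℕ} (f : (Fin n₁ → ℝ) × (Fin n₂ → ℝ) → ℝ)
    (x : (Fin n₁ → ℝ) × (Fin n₂ → ℝ)) : ℝ≥0∞ :=
  ⨆ (Q₁ : DyadicCube n₁) (Q₂ : DyadicCube n₂)
    (_ : x.1 ∈ Q₁.carrier) (_ : x.2 ∈ Q₂.carrier),
      setAvgE (fun y => (‖f y‖₊ : ℝ≥0∞)) (Q₁.carrier ×ˢ Q₂.carrier)

/-- One-parameter square function in the first variable of a bi-parameter function. -/
def Sq1 {n₁ n₂ : ℕ} (f : (Fin n₁ → ℝ) × (Fin n₂ → ℝ) → ℝ)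
    (x : (Fin n₁ → ℝ) × (Fin n₂ → ℝ)) : ℝ :=
  Real.sqrt (∑' I₁ : DyadicCube n₁, (mdiff1 f I₁ x) ^ 2)

/-- Bi-parameter square function. -/
def Sq12 {n₁ n₂ : ℕ} (f : (Fin n₁ → ℝ) × (Fin n₂ → ℝ) → ℝ)
    (x : (Fin n₁ → ℝ) × (Fin n₂ → ℝ)) : ℝ :=
  Real.sqrt (∑' I₁ : DyadicCube n₁, ∑' I₂ : DyadicCube n₂,
    (mdiff1 (fun z => mdiff2 f I₂ z) I₁ x) ^ 2)

/-- Bi-parameter `A_∞`: uniform slicewise dyadic `A_p` for some `p`. -/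
def IsAinfty2 {n₁ n₂ : ℕ} (w : (Fin n₁ → ℝ) × (Fin n₂ → ℝ) → ℝ≥0∞) : Prop :=
  ∃ p : ℝ, 1 < p ∧ ∃ N : ℝ≥0∞, N ≠ ⊤ ∧
    (∀ᵐ x₂ : Fin n₂ → ℝ, apConstD (fun x₁ => w (x₁, x₂)) p ≤ N) ∧
    (∀ᵐ x₁ : Fin n₁ → ℝ, apConstD (fun x₂ => w (x₁, x₂)) p ≤ N)

/-- Nice functions: measurable, bounded, compactly supported. -/
def Nice {α : Type*} [TopologicalSpace α] [MeasurableSpace α] (f : α → ℝ) : Prop :=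
  Measurable f ∧ HasCompactSupport f ∧ ∃ C, ∀ x, |f x| ≤ C

/-! ### Multi-parameter machinery on `∏_i ℝ^{d i}` -/

abbrev Pd {m : ℕ} (d : Fin m → ℕ) : Type := ∀ i, Fin (d i) → ℝ

section Multi
variable {m : ℕ} {d : Fin m → ℕ}

/-- Average in the `i`-th parameter only. -/
def sliceAvg (f : Pd d → ℝ) (i : Fin m) (Q : DyadicCube (d i)) (x : Pd d) : ℝ :=
  (volume Q.carrier).toReal⁻¹ * ∫ y in Q.carrier, f (Function.update x i y)

/-- Martingale difference in the `i`-th parameter only. -/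
def pDiff (f : Pd d → ℝ) (i : Fin m) (Q : DyadicCube (d i)) (x : Pd d) : ℝ :=
  ∑ ε : Fin (d i) → Bool,
    Set.indicator (Q.child ε).carrier
      (fun _ => sliceAvg f i (Q.child ε) x - sliceAvg f i Q x) (x i)

/-- Iterated martingale difference in the parameters listed in `S`. -/
def mDiffL (f : Pd d → ℝ) : List (Fin m) → (∀ i, DyadicCube (d i)) → Pd d → ℝ
  | [], _, x => f x
  | i :: t, R, x => pDiff (fun y => mDiffL f t R y) i (R i) x

/-- Extend a family of cubes indexed by `S` to all parameters (by a default cube). -/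
def extendC (S : List (Fin m)) (R : ∀ i : {i // i ∈ S}, DyadicCube (d i.1)) :
    ∀ i, DyadicCube (d i) := fun i => if h : i ∈ S then R ⟨i, h⟩ else default

/-- Multi-parameter dyadic square function in the parameters of `S`. -/
def SqL (f : Pd d → ℝ) (S : List (Fin m)) (x : Pd d) : ℝ :=
  Real.sqrt (∑' R : ∀ i : {i // i ∈ S}, DyadicCube (d i.1),
    (mDiffL f S (extendC S R) x) ^ 2)

/-- Iterated slice integral (`ℝ≥0∞`-valued) over the cubes `R i`, `i ∈ S`. -/
def sliceIntE (g : Pd d → ℝ≥0∞) : List (Fin m) → (∀ i, DyadicCube (d i)) → Pd d → ℝ≥0∞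
  | [], _, x => g x
  | i :: t, R, x =>
      (volume (R i).carrier)⁻¹ * ∫⁻ y in (R i).carrier, sliceIntE g t R (Function.update x i y)

/-- Strong dyadic maximal function in the parameters of `S`. -/
def maxS (g : Pd d → ℝ) (S : List (Fin m)) (x : Pd d) : ℝ≥0∞ :=
  ⨆ (R : ∀ i, DyadicCube (d i)) (_ : ∀ i ∈ S, x i ∈ (R i).carrier),
    sliceIntE (fun y => (‖g y‖₊ : ℝ≥0∞)) S R x

/-- Partial Haar pairing in the parameters of `S`: integrate against the Haar functions
`h_{R i}^{η i}` in those variables. -/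
def pairHaarL (f : Pd d → ℝ) : List (Fin m) → (∀ i, DyadicCube (d i)) →
    (∀ i, Fin (d i) → Bool) → Pd d → ℝ
  | [], _, _, x => f x
  | i :: t, R, η, x =>
      ∫ y, pairHaarL f t R η (Function.update x i y) * haarCube (R i) (η i) y

/-- Tensor Haar function over the parameters of `S`. -/
def haarSub (S : List (Fin m)) (R : ∀ i : {i // i ∈ S}, DyadicCube (d i.1))
    (η : ∀ i : {i // i ∈ S}, Fin (d i.1) → Bool) (x : Pd d) : ℝ :=
  ∏ i : {i // i ∈ S}, haarCube (R i) (η i) (x i.1)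

/-- Tensor of normalized indicators `1_{R i}/|R i|` over the parameters of `S`. -/
def indSub (S : List (Fin m)) (R : ∀ i : {i // i ∈ S}, DyadicCube (d i.1)) (x : Pd d) : ℝ :=
  ∏ i : {i // i ∈ S},
    Set.indicator (R i).carrier (fun _ => (volume (R i).carrier).toReal⁻¹) (x i.1)

/-- `ℝ≥0∞` version of `indSub`. -/
def indSubE (S : List (Fin m)) (R : ∀ i : {i // i ∈ S}, DyadicCube (d i.1)) (x : Pd d) : ℝ≥0∞ :=
  ∏ i : {i // i ∈ S},
    Set.indicator (R i).carrier (fun _ => (volume (R i).carrier)⁻¹) (x i.1)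

/-- The dyadic rectangle determined by a cube in every parameter. -/
def rectCarrier (R : ∀ i, DyadicCube (d i)) : Set (Pd d) := {x | ∀ i, x i ∈ (R i).carrier}

/-- Multi-parameter `A_p` constant over dyadic rectangles. -/
def apConstPd (w : Pd d → ℝ≥0∞) (p : ℝ) : ℝ≥0∞ :=
  ⨆ R : ∀ i, DyadicCube (d i), setAvgE w (rectCarrier R) *
    (setAvgE (fun x => w x ^ (1 - p / (p - 1))) (rectCarrier R)) ^ (p - 1)

end Multi

/-- Multi-parameter `A_p` constant over dyadic rectangles for a two-block product space. -/
def apConst2Pd {m₁ m₂ : ℕ} {d₁ : Fin m₁ → ℕ} {d₂ : Fin m₂ → ℕ}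
    (w : Pd d₁ × Pd d₂ → ℝ≥0∞) (p : ℝ) : ℝ≥0∞ :=
  ⨆ (R₁ : ∀ i, DyadicCube (d₁ i)) (R₂ : ∀ i, DyadicCube (d₂ i)),
    setAvgE w (rectCarrier R₁ ×ˢ rectCarrier R₂) *
      (setAvgE (fun x => w x ^ (1 - p / (p - 1))) (rectCarrier R₁ ×ˢ rectCarrier R₂)) ^ (p - 1)

end

/-! Minkowski's inequality `‖∫ F‖ ≤ ∫ ‖F‖` for the `ℓ²(ι)`-valued function `x ↦ (φ_i x)_i`
bounds `(Σ_i (∫_I φ_i)²)^{1/2}` by `∫_I (Σ_i φ_i²)^{1/2}` on every cube `I`. The cubes with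
`I^{(k)} = K` are pairwise disjoint subcubes of `K`, so summing over them gives the estimate with
constant `1`. -/

section Minkowski

variable {X ι : Type*} [MeasurableSpace X] {μ : Measure X} [Fintype ι] {φ : ι → X → ℝ}

theorem integrable_sqrt_sum_sq (hφ : ∀ i, Integrable (φ i) μ) :
    Integrable (fun x => √(∑ i, φ i x ^ 2)) μ := by
  have hF : Integrable (fun x => (WithLp.toLp 2 (fun i => φ i x) : EuclideanSpace ℝ ι)) μ :=
    Integrable.of_eval_piLp hφ
  simpa [EuclideanSpace.norm_eq] using hF.norm

theorem sqrt_sum_sq_integral_le_integral_sqrt_sum_sq (hφ : ∀ i, Integrable (φ i) μ) :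
    √(∑ i, (∫ x, φ i x ∂μ) ^ 2) ≤ ∫ x, √(∑ i, φ i x ^ 2) ∂μ := by
  let F : X → EuclideanSpace ℝ ι := fun x => WithLp.toLp 2 (fun i => φ i x)
  have hF : ∀ i, Integrable (F · i) μ := hφ
  calc √(∑ i, (∫ x, φ i x ∂μ) ^ 2) = ‖∫ x, F x ∂μ‖ := by
        simp [EuclideanSpace.norm_eq, eval_integral_piLp hF, F]
    _ ≤ ∫ x, ‖F x‖ ∂μ := norm_integral_le_integral_norm _
    _ = ∫ x, √(∑ i, φ i x ^ 2) ∂μ := by simp [EuclideanSpace.norm_eq, F]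

end Minkowski

namespace DyadicCube

variable {n : ℕ}

theorem len_pos (Q : DyadicCube n) : 0 < Q.len := zpow_pos two_pos _

theorem carrier_eq_pi (Q : DyadicCube n) :
    Q.carrier = Set.univ.pi fun i => Ico ((Q.pos i : ℝ) * Q.len) ((Q.pos i + 1) * Q.len) := by
  ext x
  simp [carrier, Set.mem_pi]

theorem measurableSet_carrier (Q : DyadicCube n) : MeasurableSet Q.carrier := by
  rw [carrier_eq_pi]
  exact .univ_pi fun _ => measurableSet_Ico

theorem volume_carrier (Q : DyadicCube n) : volume Q.carrier = ENNReal.ofReal Q.len ^ n := by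
  simp [carrier_eq_pi, volume_pi_pi, Real.volume_Ico, add_mul]

theorem toReal_volume_carrier_pos (Q : DyadicCube n) : 0 < (volume Q.carrier).toReal := by
  rw [volume_carrier, ENNReal.toReal_pow, ENNReal.toReal_ofReal Q.len_pos.le]
  exact pow_pos Q.len_pos n

theorem toReal_volume_mul_cubeAvg (f : (Fin n → ℝ) → ℝ) (Q : DyadicCube n) :
    (volume Q.carrier).toReal * cubeAvg f Q = ∫ x in Q.carrier, f x := by
  rw [cubeAvg, mul_inv_cancel_left₀ Q.toReal_volume_carrier_pos.ne']

theorem _root_.MeasureTheory.LocallyIntegrable.integrableOn_carrier {f : (Fin n → ℝ) → ℝ}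
    (hf : LocallyIntegrable f) (Q : DyadicCube n) : IntegrableOn f Q.carrier := by
  refine (hf.integrableOn_isCompact (isCompact_univ_pi fun i =>
    isCompact_Icc (a := (Q.pos i : ℝ) * Q.len) (b := (Q.pos i + 1) * Q.len))).mono_set ?_
  rw [carrier_eq_pi]
  exact Set.pi_mono fun _ _ => Ico_subset_Icc_self

theorem scale_eq_of_ancestor_eq {k : ℕ} {I K : DyadicCube n} (h : ancestor k I = K) :
    I.scale = K.scale + k := by
  rw [← h, ancestor]
  ring

theorem carrier_subset_ancestor (k : ℕ) (I : DyadicCube n) :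
    I.carrier ⊆ (ancestor k I).carrier := by
  intro x hx i
  have h2k : (0 : ℤ) < 2 ^ k := pow_pos two_pos k
  have hlen : (ancestor k I).len = 2 ^ k * I.len := by
    rw [ancestor, len, len, neg_sub, sub_eq_add_neg, zpow_add₀ two_ne_zero, zpow_natCast]
  have hpos : ((ancestor k I).pos i : ℝ) = ((I.pos i / 2 ^ k : ℤ) : ℝ) := by
    show ((Int.fdiv (I.pos i) (2 ^ k) : ℤ) : ℝ) = _
    rw [Int.fdiv_eq_ediv_of_nonneg _ h2k.le]
  have hlo : I.pos i / 2 ^ k * 2 ^ k ≤ I.pos i := Int.ediv_mul_le _ h2k.ne'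
  have hhi : I.pos i < (I.pos i / 2 ^ k + 1) * 2 ^ k := Int.lt_ediv_add_one_mul_self _ h2k
  obtain ⟨hx₁, hx₂⟩ := hx i
  rw [hpos, hlen, ← mul_assoc, ← mul_assoc]
  constructor
  · exact le_trans (mul_le_mul_of_nonneg_right (by exact_mod_cast hlo) I.len_pos.le) hx₁
  · exact hx₂.trans_le (mul_le_mul_of_nonneg_right (by exact_mod_cast Int.add_one_le_iff.2 hhi) I.len_pos.le)

theorem disjoint_carrier_of_scale_eq {I J : DyadicCube n} (hs : I.scale = J.scale)
    (hne : I ≠ J) : Disjoint I.carrier J.carrier := by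
  obtain ⟨i, hi⟩ : ∃ i, I.pos i ≠ J.pos i := by
    by_contra! h
    cases I; cases J
    exact hne (by simp_all [funext_iff])
  have hlen : I.len = J.len := by rw [len, len, hs]
  refine Set.disjoint_left.2 fun x hxI hxJ => hi ?_
  obtain ⟨h₁, h₂⟩ := hxI i
  obtain ⟨h₃, h₄⟩ := hxJ i
  rw [hlen] at h₁ h₂
  have a₁ : (I.pos i : ℝ) < J.pos i + 1 := lt_of_mul_lt_mul_right (h₁.trans_lt h₄) J.len_pos.le
  have a₂ : (J.pos i : ℝ) < I.pos i + 1 := lt_of_mul_lt_mul_right (h₃.trans_lt h₂) J.len_pos.le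
  have b₁ : I.pos i < J.pos i + 1 := by exact_mod_cast a₁
  have b₂ : J.pos i < I.pos i + 1 := by exact_mod_cast a₂
  omega

theorem sum_setIntegral_le_of_ancestor_eq {k : ℕ} {K : DyadicCube n} {g : (Fin n → ℝ) → ℝ}
    (hg : IntegrableOn g K.carrier) (hg₀ : ∀ x, 0 ≤ g x)
    (s : Finset {I : DyadicCube n // ancestor k I = K}) :
    ∑ I ∈ s, ∫ x in I.1.carrier, g x ≤ ∫ x in K.carrier, g x := by
  have hsub : ∀ I : {I : DyadicCube n // ancestor k I = K}, I.1.carrier ⊆ K.carrier :=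
    fun I => by simpa only [I.2] using carrier_subset_ancestor k I.1
  rw [← integral_biUnion_finset s (fun I _ => I.1.measurableSet_carrier)
    (fun I _ J _ hIJ => disjoint_carrier_of_scale_eq
      (by rw [scale_eq_of_ancestor_eq I.2, scale_eq_of_ancestor_eq J.2])
      (fun h => hIJ (Subtype.ext h)))
    (fun I _ => hg.mono_set (hsub I))]
  exact setIntegral_mono_set hg (.of_forall hg₀) (iUnion₂_subset fun I _ => hsub I).eventuallyLE

end DyadicCube

/-- Kahane–Khintchine averaging estimate: there is an absolute
constant `C` such that
`Σ_{I^{(k)}=K} |K|⁻¹ (Σ_i |I|² ⟨φ_i⟩_I²)^{1/2} ≤ C ⟨(Σ_i φ_i²)^{1/2}⟩_K`. -/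
theorem stmt7 :
    ∃ C : ℝ, 0 < C ∧
      ∀ (n : ℕ) (ι : Type) [Fintype ι] (K : DyadicCube n) (k : ℕ)
        (φ : ι → (Fin n → ℝ) → ℝ),
        (∀ i, MeasureTheory.LocallyIntegrable (φ i)) →
        (∀ i x, 0 ≤ φ i x) →
        (∑' I : {I : DyadicCube n // DyadicCube.ancestor k I = K},
            (volume K.carrier).toReal⁻¹ *
              Real.sqrt (∑ i, ((volume I.1.carrier).toReal * cubeAvg (φ i) I.1) ^ 2))
          ≤ C * cubeAvg (fun x => Real.sqrt (∑ i, (φ i x) ^ 2)) K := by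
  refine ⟨1, one_pos, fun n ι _ K k φ hφ _ => ?_⟩
  have hφQ (Q : DyadicCube n) (i : ι) : IntegrableOn (φ i) Q.carrier :=
    (hφ i).integrableOn_carrier Q
  rw [one_mul, cubeAvg]
  refine tsum_le_of_sum_le' (by positivity) fun s => ?_
  rw [← Finset.mul_sum]
  gcongr
  calc ∑ I ∈ s, √(∑ i, ((volume I.1.carrier).toReal * cubeAvg (φ i) I.1) ^ 2)
      = ∑ I ∈ s, √(∑ i, (∫ x in I.1.carrier, φ i x) ^ 2) := by
        simp only [DyadicCube.toReal_volume_mul_cubeAvg]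
    _ ≤ ∑ I ∈ s, ∫ x in I.1.carrier, √(∑ i, φ i x ^ 2) :=
        Finset.sum_le_sum fun I _ => sqrt_sum_sq_integral_le_integral_sqrt_sum_sq (hφQ I.1)
    _ ≤ ∫ x in K.carrier, √(∑ i, φ i x ^ 2) :=
        DyadicCube.sum_setIntegral_le_of_ancestor_eq (integrable_sqrt_sum_sq (hφQ K))
          (fun _ => Real.sqrt_nonneg _) s
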